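/- arXiv:1405.1614 — 2 statements merged into one kernel-verified Lean document; each statement's English description precedes it below -/
import Mathlib

section
/- Let A be an n×n matrix over a quaternion algebra H, and let b ∈ H. If the i-th row of A is replaced by b times that row (left multiplication entrywise), then the i-th row immanant of the resulting matrix equals b · rImmᵢ(A). -/
/-!
In the left-ordered product of `rImm_i` for a permutation `σ`, the index `i` occurs exactly once,
as the first factor, since the cycle of `i` is listed first and no later cycle meets it.
Hence scaling row `i` on the left by `b'` scales every term on the left by `b'`, and the
coefficient `χ σ` commutes with `b'` because it is a scalar.
-/

open Quaternion Equiv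

variable {F : Type*} [Field F] {a b : F} {n : ℕ}

/-- The cycle (orbit) of `x` under `σ`, listed as `x, σ x, σ² x, …`. -/
noncomputable def orbitList (σ : Equiv.Perm (Fin n)) (x : Fin n) : List (Fin n) :=
  (List.range (Function.minimalPeriod σ x)).map fun m => (σ ^ m) x

/-- Left-ordered list of indices: first the cycle of `i`, then the remaining cycles,
each starting at its smallest element, ordered increasingly by their smallest elements. -/
noncomputable def rowList (σ : Equiv.Perm (Fin n)) (i : Fin n) : List (Fin n) :=
  (List.finRange n).foldl (fun acc x => if x ∈ acc then acc else acc ++ orbitList σ x)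
    (orbitList σ i)

/-- Right-ordered list of indices for the column immanant: the cycle of `j` rightmost,
remaining cycles prepended in order, so they appear in decreasing order of smallest
elements from the left. -/
noncomputable def colList (σ : Equiv.Perm (Fin n)) (j : Fin n) : List (Fin n) :=
  (List.finRange n).foldl (fun acc x => if x ∈ acc then acc else orbitList σ x ++ acc)
    (orbitList σ j)

/-- The `i`th row immanant of a matrix over the quaternion algebra `ℍ[F,a,b]`. -/
noncomputable def rImm (χ : Equiv.Perm (Fin n) → F) (A : Matrix (Fin n) (Fin n) ℍ[F,a,b])
    (i : Fin n) : ℍ[F,a,b] :=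
  ∑ σ : Equiv.Perm (Fin n),
    algebraMap F ℍ[F,a,b] (χ σ) * ((rowList σ i).map fun x => A x (σ x)).prod

/-- The `j`th column immanant of a matrix over the quaternion algebra `ℍ[F,a,b]`. -/
noncomputable def cImm (χ : Equiv.Perm (Fin n) → F) (A : Matrix (Fin n) (Fin n) ℍ[F,a,b])
    (j : Fin n) : ℍ[F,a,b] :=
  ∑ σ : Equiv.Perm (Fin n),
    algebraMap F ℍ[F,a,b] (χ σ) * ((colList σ j).map fun x => A x (σ x)).prod

lemma mem_orbitList_iff_sameCycle {σ : Equiv.Perm (Fin n)} {x y : Fin n} :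
    y ∈ orbitList σ x ↔ σ.SameCycle x y := by
  simp only [orbitList, List.mem_map, List.mem_range]
  constructor
  · rintro ⟨m, -, rfl⟩
    exact ⟨m, by rw [zpow_natCast]⟩
  · intro h
    obtain ⟨m, rfl⟩ := h.exists_nat_pow_eq
    have hpos := Function.minimalPeriod_pos_of_mem_periodicPts (σ.injective.mem_periodicPts x)
    refine ⟨m % Function.minimalPeriod σ x, Nat.mod_lt _ hpos, ?_⟩
    simp only [← Equiv.Perm.iterate_eq_pow, Function.iterate_mod_minimalPeriod_eq]

lemma nodup_orbitList (σ : Equiv.Perm (Fin n)) (x : Fin n) : (orbitList σ x).Nodup := by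
  refine List.nodup_range.map_on fun k hk m hm h => ?_
  simp only [← Equiv.Perm.iterate_eq_pow] at h
  exact Function.iterate_injOn_Iio_minimalPeriod (List.mem_range.1 hk) (List.mem_range.1 hm) h

lemma orbitList_eq_cons (σ : Equiv.Perm (Fin n)) (x : Fin n) :
    ∃ t, orbitList σ x = x :: t ∧ x ∉ t := by
  obtain ⟨k, hk⟩ : ∃ k, Function.minimalPeriod σ x = k + 1 :=
    Nat.exists_eq_add_one.2
      (Function.minimalPeriod_pos_of_mem_periodicPts (σ.injective.mem_periodicPts x))
  have hcons : orbitList σ x = x :: (List.range k).map fun m => (σ ^ (m + 1)) x := by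
    simp [orbitList, hk, List.range_succ_eq_map, Function.comp_def]
  refine ⟨_, hcons, ?_⟩
  have := nodup_orbitList σ x
  rw [hcons] at this
  exact (List.nodup_cons.1 this).1

lemma exists_foldl_eq_append_notMem (σ : Equiv.Perm (Fin n)) (i : Fin n) (L : List (Fin n)) :
    ∀ acc : List (Fin n), orbitList σ i ⊆ acc → ∃ e : List (Fin n),
      L.foldl (fun acc x => if x ∈ acc then acc else acc ++ orbitList σ x) acc = acc ++ e ∧
        i ∉ e := by
  induction L with
  | nil => exact fun acc _ => ⟨[], by simp, List.not_mem_nil⟩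
  | cons x L ih =>
    intro acc hacc
    by_cases hx : x ∈ acc
    · simpa [hx] using ih acc hacc
    · obtain ⟨e, he, hie⟩ :=
        ih (acc ++ orbitList σ x) (List.Subset.trans hacc (List.subset_append_left _ _))
      refine ⟨orbitList σ x ++ e, by simp [hx, he], ?_⟩
      rw [List.mem_append, not_or]
      refine ⟨fun hi => hx (hacc ?_), hie⟩
      exact mem_orbitList_iff_sameCycle.2 (mem_orbitList_iff_sameCycle.1 hi).symm

lemma rowList_eq_cons (σ : Equiv.Perm (Fin n)) (i : Fin n) :
    ∃ t, rowList σ i = i :: t ∧ i ∉ t := by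
  obtain ⟨t, ht, hit⟩ := orbitList_eq_cons σ i
  obtain ⟨e, he, hie⟩ :=
    exists_foldl_eq_append_notMem σ i (List.finRange n) (orbitList σ i) (List.Subset.refl _)
  refine ⟨t ++ e, by rw [rowList, he, ht, List.cons_append], ?_⟩
  simp [hit, hie]

lemma prod_map_updateRow_mul_of_notMem {ι R : Type*} [DecidableEq ι] [Monoid R]
    (A : Matrix ι ι R) (f : ι → ι) (c : R) {i : ι} {t : List ι} (hi : i ∉ t) :
    ((i :: t).map fun x => A.updateRow i (fun j => c * A i j) x (f x)).prod =
      c * ((i :: t).map fun x => A x (f x)).prod := by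
  have hrest : (t.map fun x => A.updateRow i (fun j => c * A i j) x (f x)) =
      t.map fun x => A x (f x) :=
    List.map_congr_left fun x hx => by rw [Matrix.updateRow_ne (ne_of_mem_of_not_mem hx hi)]
  simp only [List.map_cons, List.prod_cons, Matrix.updateRow_self, hrest, mul_assoc]

/-- Left multiplying the `i`th row of `A` by `b' ∈ ℍ[F,a,b]` multiplies the `i`th row
immanant by `b'` on the left. -/
theorem rImm_row_smul (χ : Equiv.Perm (Fin n) → F)
    (A : Matrix (Fin n) (Fin n) ℍ[F,a,b]) (i : Fin n) (b' : ℍ[F,a,b]) :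
    rImm χ (A.updateRow i fun l => b' * A i l) i = b' * rImm χ A i := by
  simp only [rImm, Finset.mul_sum]
  refine Finset.sum_congr rfl fun σ _ => ?_
  obtain ⟨t, hrow, hi⟩ := rowList_eq_cons σ i
  rw [hrow, prod_map_updateRow_mul_of_notMem A σ b' hi, Algebra.left_comm]
end

section
/- Let A be an n×n matrix over a quaternion algebra H, and let b ∈ H. If the j-th column of A is replaced by that column times b (right multiplication entrywise), then the j-th column immanant of the resulting matrix equals cImm_j(A) · b. -/
open Quaternion Equiv

variable {F : Type*} [Field F] {a b : F} {n : ℕ}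

open Function

/-! In every term of the column immanant the cycle of `j` is listed last and ends at `σ⁻¹ j`, so
the only factor taken from column `j`, namely `A (σ⁻¹ j) j`, is the rightmost one. Hence `b'`
factors out on the right of each product without commuting past any quaternion. -/

theorem prod_concat_map_updateCol_mul {m α : Type*} [DecidableEq m] [Monoid α]
    (A : Matrix m m α) (f : m → m) (j : m) (c : α) {L : List m} {y : m}
    (hL : ∀ x ∈ L, f x ≠ j) (hy : f y = j) :
    ((L ++ [y]).map fun x => A.updateCol j (fun l => A l j * c) x (f x)).prod
      = ((L ++ [y]).map fun x => A x (f x)).prod * c := by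
  have hLA : L.map (fun x => A.updateCol j (fun l => A l j * c) x (f x))
      = L.map fun x => A x (f x) :=
    List.map_congr_left fun x hx => Matrix.updateCol_ne (hL x hx)
  simp only [List.map_append, List.prod_append, hLA, List.map_singleton, List.prod_singleton,
    hy, Matrix.updateCol_self, mul_assoc]

theorem mem_orbitList {σ : Perm (Fin n)} {x y : Fin n} : y ∈ orbitList σ x ↔ σ.SameCycle x y := by
  have hx : x ∈ periodicPts σ := σ.injective.mem_periodicPts x
  have hcoe : (orbitList σ x : Cycle (Fin n)) = periodicOrbit σ x := by
    simp only [orbitList, periodicOrbit, Perm.coe_pow]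
  rw [← Cycle.mem_coe_iff, hcoe, mem_periodicOrbit_iff hx]
  constructor
  · rintro ⟨k, rfl⟩
    rw [← Perm.coe_pow]
    exact Perm.SameCycle.refl σ x |>.pow_right
  · intro h
    obtain ⟨k, hk⟩ := h.exists_nat_pow_eq
    exact ⟨k, by rw [← Perm.coe_pow, hk]⟩

theorem orbitList_eq_concat_symm (σ : Perm (Fin n)) (x : Fin n) :
    ∃ L, orbitList σ x = L ++ [σ.symm x] ∧ ∀ y ∈ L, σ y ≠ x := by
  obtain ⟨k, hk⟩ : ∃ k, minimalPeriod σ x = k + 1 :=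
    Nat.exists_eq_add_one.2 (minimalPeriod_pos_of_mem_periodicPts (σ.injective.mem_periodicPts x))
  have hσ_pow (m : ℕ) : σ ((σ ^ m) x) = σ^[m + 1] x := by
    rw [iterate_succ_apply', ← Perm.coe_pow]
  refine ⟨(List.range k).map fun m => (σ ^ m) x, ?_, ?_⟩
  · have hlast : (σ ^ k) x = σ.symm x := by
      rw [Equiv.eq_symm_apply, hσ_pow, ← hk]
      exact isPeriodicPt_minimalPeriod σ x
    rw [orbitList, hk, List.range_succ, List.map_append, List.map_singleton, hlast]
  · simp only [List.mem_map, List.mem_range]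
    rintro _ ⟨m, hm, rfl⟩
    rw [hσ_pow]
    exact not_isPeriodicPt_of_pos_of_lt_minimalPeriod m.succ_ne_zero (by omega)

theorem colList_eq_append_orbitList (σ : Perm (Fin n)) (j : Fin n) :
    ∃ P, colList σ j = P ++ orbitList σ j ∧ ∀ y ∈ P, ¬ σ.SameCycle j y := by
  suffices h : ∀ (l : List (Fin n)) (P : List (Fin n)), (∀ y ∈ P, ¬ σ.SameCycle j y) →
      ∃ P', l.foldl (fun acc x => if x ∈ acc then acc else orbitList σ x ++ acc)
        (P ++ orbitList σ j) = P' ++ orbitList σ j ∧ ∀ y ∈ P', ¬ σ.SameCycle j y from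
    h _ [] (by simp)
  intro l
  induction l with
  | nil => exact fun P hP => ⟨P, rfl, hP⟩
  | cons x l ih =>
    intro P hP
    rw [List.foldl_cons]
    split_ifs with hx
    · exact ih P hP
    · rw [← List.append_assoc]
      refine ih _ fun y hy hjy => ?_
      rcases List.mem_append.1 hy with hy | hy
      · exact hx (List.mem_append_right P (mem_orbitList.2 (hjy.trans (mem_orbitList.1 hy).symm)))
      · exact hP y hy hjy

theorem colList_eq_concat_symm (σ : Perm (Fin n)) (j : Fin n) :
    ∃ L, colList σ j = L ++ [σ.symm j] ∧ ∀ y ∈ L, σ y ≠ j := by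
  obtain ⟨P, hP, hPj⟩ := colList_eq_append_orbitList σ j
  obtain ⟨L, hL, hLj⟩ := orbitList_eq_concat_symm σ j
  refine ⟨P ++ L, by rw [hP, hL, List.append_assoc], fun y hy hyj => ?_⟩
  rcases List.mem_append.1 hy with hy | hy
  · exact hPj y hy (Perm.sameCycle_apply_right.1 (hyj ▸ Perm.SameCycle.refl σ j))
  · exact hLj y hy hyj

/-- Right multiplying the `j`th column of `A` by `b' ∈ ℍ[F,a,b]` multiplies the `j`th
column immanant by `b'` on the right. -/
theorem cImm_col_smul (χ : Equiv.Perm (Fin n) → F)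
    (A : Matrix (Fin n) (Fin n) ℍ[F,a,b]) (j : Fin n) (b' : ℍ[F,a,b]) :
    cImm χ (A.updateCol j fun l => A l j * b') j = cImm χ A j * b' := by
  rw [cImm, cImm, Finset.sum_mul]
  refine Finset.sum_congr rfl fun σ _ => ?_
  obtain ⟨L, hL, hLj⟩ := colList_eq_concat_symm σ j
  rw [hL, prod_concat_map_updateCol_mul A σ j b' hLj (σ.apply_symm_apply j), mul_assoc]
end
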